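/- arXiv:2204.10030 — 2 statements merged into one kernel-verified Lean document; each statement's English description precedes it below -/
import Mathlib

section
/- Under the hypotheses of the Wang-Elia setup, if θ ∈ ℝ is a critical point of the global cost (Σᵢ ∇fᵢ(θ) = 0), then the pair (x*, z*) with x* = 𝟙θ and z* = −γ S (SᵀKS)⁻¹ Sᵀ Φ(𝟙θ) is a fixed point of the map (x,z) ↦ ((I−K)x − Kz − γΦ(x), z + Kx). -/
open Matrix

/-!
Since `x* = 𝟙θ` lies in `ker K`, both fixed-point equations reduce to `K z* = -γ Φ(x*)`, i.e.
`K S (SᵀKS)⁻¹ Sᵀ φ = φ` for `φ = Φ(x*)`. The columns of `S` together with `𝟙` form an orthogonal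
basis of `ℝᴺ`, so it suffices to test this identity against `Sᵀ` and against `𝟙`: the first test
holds by construction, the second because `𝟙ᵀK = 0` and `𝟙ᵀφ = Σᵢ f'ᵢ(θ) = 0`. The matrix `SᵀKS`
is invertible because `K` is positive semidefinite and `ker K = span 𝟙` meets the range of `S`
trivially.
-/

namespace Matrix

open scoped ComplexOrder

theorem eq_zero_of_transpose_mulVec_eq_zero {m n R : Type*} [Fintype m] [Fintype n]
    [DecidableEq m] [DecidableEq n] [CommRing R] {B : Matrix m n R} {C : Matrix n m R}
    (hCB : C * B = 1) (hcard : Fintype.card m = Fintype.card n) {ψ : m → R}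
    (hψ : Bᵀ *ᵥ ψ = 0) : ψ = 0 := by
  have hBC : B * C = 1 := (mul_eq_one_comm_of_card_eq m n R hcard).2 hCB
  calc ψ = (B * C)ᵀ *ᵥ ψ := by rw [hBC, transpose_one, one_mulVec]
    _ = 0 := by rw [transpose_mul, ← mulVec_mulVec, hψ, mulVec_zero]

theorem isUnit_det_conjTranspose_mul_mul {m n 𝕜 : Type*} [Fintype m] [Fintype n]
    [DecidableEq n] [RCLike 𝕜] {K : Matrix m m 𝕜} {S : Matrix m n 𝕜} (hK : K.PosSemidef)
    (hKS : ∀ v, K *ᵥ (S *ᵥ v) = 0 → v = 0) : IsUnit (Sᴴ * K * S).det := by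
  rw [isUnit_iff_ne_zero]
  intro hdet
  obtain ⟨v, hv0, hv⟩ := exists_mulVec_eq_zero_iff.mpr hdet
  refine hv0 (hKS v ((hK.dotProduct_mulVec_zero_iff _).1 ?_))
  rw [star_mulVec, ← dotProduct_mulVec, mulVec_mulVec, mulVec_mulVec, hv, dotProduct_zero]

end Matrix

section Consensus

variable {N : ℕ} {K : Matrix (Fin N) (Fin N) ℝ} {S : Matrix (Fin N) (Fin (N - 1)) ℝ}

theorem eq_zero_of_transpose_mulVec_eq_zero_of_sum_eq_zero
    (hS1 : Sᵀ *ᵥ (fun _ => (1 : ℝ)) = 0) (hS2 : Sᵀ * S = 1) {ψ : Fin N → ℝ}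
    (hSψ : Sᵀ *ᵥ ψ = 0) (hψ : ∑ i, ψ i = 0) : ψ = 0 := by
  rcases N.eq_zero_or_pos with rfl | hN
  · exact Subsingleton.elim _ _
  set one : Matrix (Fin N) Unit ℝ := replicateCol Unit fun _ => 1
  have hcard : Fintype.card (Fin N) = Fintype.card (Fin (N - 1) ⊕ Unit) := by
    simp only [Fintype.card_fin, Fintype.card_sum, Fintype.card_unique]
    omega
  -- `C` is a left inverse of `B = [S | 𝟙]`, whose columns are orthogonal with squared norms 1, N.
  refine eq_zero_of_transpose_mulVec_eq_zero (B := fromCols S one)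
    (C := fromRows Sᵀ ((N : ℝ)⁻¹ • oneᵀ)) ?_ hcard ?_
  · have hSone : Sᵀ * one = 0 := by
      ext i j
      simpa [one, mul_apply, mulVec, dotProduct] using congrFun hS1 i
    have hone : oneᵀ * one = (N : ℝ) • 1 := by
      ext
      simp [one, mul_apply]
    have honeS : oneᵀ * S = 0 := by simpa using congrArg transpose hSone
    rw [fromRows_mul_fromCols, hS2, hSone, Matrix.smul_mul, Matrix.smul_mul, honeS, hone,
      smul_zero, smul_smul, inv_mul_cancel₀ (by positivity), one_smul, fromBlocks_one]
  · rw [transpose_fromCols, fromRows_mulVec]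
    ext (i | i)
    · simpa using congrFun hSψ i
    · simpa [one, mulVec, dotProduct] using hψ

theorem mulVec_mulVec_eq_zero_iff
    (hker : ∀ v : Fin N → ℝ, K *ᵥ v = 0 ↔ ∃ c : ℝ, v = fun _ => c)
    (hS1 : Sᵀ *ᵥ (fun _ => (1 : ℝ)) = 0) (hS2 : Sᵀ * S = 1) {v : Fin (N - 1) → ℝ} :
    K *ᵥ (S *ᵥ v) = 0 ↔ v = 0 := by
  refine ⟨fun hv => ?_, fun hv => by rw [hv, mulVec_zero, mulVec_zero]⟩
  obtain ⟨c, hc⟩ := (hker _).1 hv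
  calc v = Sᵀ *ᵥ (S *ᵥ v) := by rw [mulVec_mulVec, hS2, one_mulVec]
    _ = c • Sᵀ *ᵥ (fun _ => (1 : ℝ)) := by rw [hc, ← mulVec_smul]; congr 1; ext; simp
    _ = 0 := by rw [hS1, smul_zero]

theorem mulVec_mulVec_inv_mulVec_transpose_mulVec (hKsym : Kᵀ = K)
    (hK1 : K *ᵥ (fun _ => (1 : ℝ)) = 0) (hS1 : Sᵀ *ᵥ (fun _ => (1 : ℝ)) = 0) (hS2 : Sᵀ * S = 1)
    (hM : IsUnit (Sᵀ * K * S).det) {φ : Fin N → ℝ} (hφ : ∑ i, φ i = 0) :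
    K *ᵥ (S *ᵥ ((Sᵀ * K * S)⁻¹ *ᵥ (Sᵀ *ᵥ φ))) = φ := by
  set y := S *ᵥ ((Sᵀ * K * S)⁻¹ *ᵥ (Sᵀ *ᵥ φ))
  have hSKy : Sᵀ *ᵥ (K *ᵥ y) = Sᵀ *ᵥ φ := by
    simp only [y, mulVec_mulVec, ← Matrix.mul_assoc, mul_nonsing_inv _ hM, Matrix.one_mul]
  have hsum : ∑ i, (K *ᵥ y) i = 0 := by
    have h1K : (fun _ => (1 : ℝ)) ᵥ* K = 0 := by rw [← mulVec_transpose, hKsym, hK1]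
    simpa [dotProduct] using (dotProduct_mulVec (fun _ => (1 : ℝ)) K y).trans (by simp [h1K])
  refine (sub_eq_zero.1 (eq_zero_of_transpose_mulVec_eq_zero_of_sum_eq_zero hS1 hS2 ?_ ?_)).symm
  · rw [mulVec_sub, hSKy, sub_self]
  · simp [Finset.sum_sub_distrib, hφ, hsum]

end Consensus

theorem wang_elia_optimal_equilibrium_exists_general
    (N : ℕ)
    (f : Fin N → ℝ → ℝ)
    (K : Matrix (Fin N) (Fin N) ℝ)
    (hKsym : Kᵀ = K)
    (hker : ∀ v : Fin N → ℝ, K *ᵥ v = 0 ↔ ∃ c : ℝ, v = fun _ => c)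
    (hspec : spectrum ℝ K ⊆ Set.Ico (0 : ℝ) 1)
    (S : Matrix (Fin N) (Fin (N - 1)) ℝ)
    (hS1 : Sᵀ *ᵥ (fun _ => (1 : ℝ)) = 0)
    (hS2 : Sᵀ * S = 1)
    (γ : ℝ)
    (Φ : (Fin N → ℝ) → (Fin N → ℝ))
    (hΦ : Φ = fun x i => deriv (f i) (x i))
    (θ : ℝ) (hθ : ∑ i, deriv (f i) θ = 0)
    (xstar zstar : Fin N → ℝ)
    (hx : xstar = fun _ => θ)
    (hz : zstar = -(γ • (S *ᵥ ((Sᵀ * K * S)⁻¹ *ᵥ (Sᵀ *ᵥ Φ xstar))))) :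
    (1 - K) *ᵥ xstar - K *ᵥ zstar - γ • Φ xstar = xstar ∧
    zstar + K *ᵥ xstar = zstar := by
  subst hx hΦ
  have hK : K.PosSemidef := posSemidef_iff_isHermitian_and_spectrum_nonneg.2
    ⟨by rwa [IsHermitian, conjTranspose_eq_transpose_of_trivial], fun _ h => (hspec h).1⟩
  have hM : IsUnit (Sᵀ * K * S).det := by
    simpa only [conjTranspose_eq_transpose_of_trivial] using
      isUnit_det_conjTranspose_mul_mul hK fun v => (mulVec_mulVec_eq_zero_iff hker hS1 hS2).1
  have hKx : K *ᵥ (fun _ => θ) = 0 := (hker _).2 ⟨θ, rfl⟩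
  have hKz : K *ᵥ zstar = -(γ • fun i => deriv (f i) θ) := by
    rw [hz, mulVec_neg, mulVec_smul, mulVec_mulVec_inv_mulVec_transpose_mulVec hKsym
      ((hker _).2 ⟨1, rfl⟩) hS1 hS2 hM hθ]
  refine ⟨?_, by rw [hKx, add_zero]⟩
  rw [sub_mulVec, one_mulVec, hKx, hKz]
  abel

/-- If `θ` is a critical point of the global cost
(`Σᵢ ∇fᵢ(θ) = 0`), then `(x*, z*)` with `x* = 𝟙θ` and
`z* = −γ S (SᵀKS)⁻¹ Sᵀ Φ(𝟙θ)` is a fixed point of the Wang-Elia map. -/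
theorem wang_elia_optimal_equilibrium_exists
    (N : ℕ) (hN : 2 ≤ N)
    (f : Fin N → ℝ → ℝ)
    (hf : ∀ i, ContDiff ℝ 1 (f i))
    (K : Matrix (Fin N) (Fin N) ℝ)
    (hKsym : Kᵀ = K)
    (hker : ∀ v : Fin N → ℝ, K *ᵥ v = 0 ↔ ∃ c : ℝ, v = fun _ => c)
    (hspec : spectrum ℝ K ⊆ Set.Ico (0 : ℝ) 1)
    (S : Matrix (Fin N) (Fin (N - 1)) ℝ)
    (hS1 : Sᵀ *ᵥ (fun _ => (1 : ℝ)) = 0)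
    (hS2 : Sᵀ * S = 1)
    (γ : ℝ) (hγ : 0 < γ)
    (Φ : (Fin N → ℝ) → (Fin N → ℝ))
    (hΦ : Φ = fun x i => deriv (f i) (x i))
    (θ : ℝ) (hθ : ∑ i, deriv (f i) θ = 0)
    (xstar zstar : Fin N → ℝ)
    (hx : xstar = fun _ => θ)
    (hz : zstar = -(γ • (S *ᵥ ((Sᵀ * K * S)⁻¹ *ᵥ (Sᵀ *ᵥ Φ xstar))))) :
    (1 - K) *ᵥ xstar - K *ᵥ zstar - γ • Φ xstar = xstar ∧
    zstar + K *ᵥ xstar = zstar :=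
  wang_elia_optimal_equilibrium_exists_general N f K hKsym hker hspec S hS1 hS2 γ Φ hΦ θ hθ xstar
    zstar hx hz
end

section
/- Under Assumptions of Lipschitz gradients and strong convexity of the global cost, consider the average error dynamics ξ_m⁺ = ξ_m − (γ/N)𝟙ᵀ(Φ(x) − Φ(𝟙θ*)) + w_m with x = 𝟙(ξ_m + θ*) + S ξ_⊥. Then there exist constants c₀, c₂, γ₀* > 0 and a function c₆(γ) such that for all γ ∈ (0, γ₀*], the function V₁(ξ_m) = ξ_m² satisfies the ISS dissipation inequality V₁(ξ_m⁺) − V₁(ξ_m) ≤ −2c₀γ ξ_m² + (c₇γ + c₅γ²)|ξ_⊥|² + c₆(γ) w_m² for suitable positive constants c₅, c₇. -/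
/-!
Write `u` for the sum of gradient differences along the consensus direction and `e` for the
perturbation caused by the disagreement `S ξ_⊥`, so that `ξ_m⁺ = ξ_m − (γ/N)(u + e) + w_m`.
Strong convexity of `∑ fᵢ` gives `m ξ_m² ≤ ξ_m u`, and the Lipschitz bounds give `u² ≤ N²ℓ²ξ_m²`
and `e² ≤ Nℓ²|ξ_⊥|²`, the columns of `S` being orthonormal. For `γ` small the gradient step then
contracts `ξ_m²` by the factor `1 − 3ε`, `ε = γm/(4N)`, up to a multiple of `|ξ_⊥|²`, and Young's
inequality with weight `ε` absorbs the disturbance `w_m` at the cost of `(1 + 1/ε) w_m²`.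
-/

open Matrix Finset

lemma StrongConvexOn.mul_sq_le_deriv_sub_mul {F : ℝ → ℝ} {m : ℝ}
    (hF : StrongConvexOn Set.univ m F) (hd : Differentiable ℝ F) (x y : ℝ) :
    m * (x - y) ^ 2 ≤ (deriv F x - deriv F y) * (x - y) := by
  have hconv : ConvexOn ℝ Set.univ fun z : ℝ => F z - m / 2 * z ^ 2 := by
    simpa [Real.norm_eq_abs, sq_abs] using strongConvexOn_iff_convex.mp hF
  have hderiv : ∀ z, HasDerivAt (fun z : ℝ => F z - m / 2 * z ^ 2) (deriv F z - m * z) z := by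
    intro z
    refine ((hd z).hasDerivAt.fun_sub ((hasDerivAt_pow 2 z).const_mul (m / 2))).congr_deriv ?_
    norm_num; ring
  have hmono := hconv.monotoneOn_deriv fun z _ => (hderiv z).differentiableAt
  rw [funext fun z => (hderiv z).deriv] at hmono
  rcases le_total y x with h | h
  · nlinarith [hmono trivial trivial h]
  · nlinarith [hmono trivial trivial h]

lemma sq_sum_sub_le_of_lipschitzWith {ι : Type*} (s : Finset ι) {g : ι → ℝ → ℝ} {K : NNReal}
    (hg : ∀ i, LipschitzWith K (g i)) (x y : ι → ℝ) :
    (∑ i ∈ s, (g i (x i) - g i (y i))) ^ 2 ≤ K ^ 2 * #s * ∑ i ∈ s, (x i - y i) ^ 2 := by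
  have habs : |∑ i ∈ s, (g i (x i) - g i (y i))| ≤ ∑ i ∈ s, K * |x i - y i| :=
    (abs_sum_le_sum_abs _ _).trans <| sum_le_sum fun i _ => by
      simpa [Real.dist_eq] using (hg i).dist_le_mul (x i) (y i)
  calc (∑ i ∈ s, (g i (x i) - g i (y i))) ^ 2
      = |∑ i ∈ s, (g i (x i) - g i (y i))| ^ 2 := (sq_abs _).symm
    _ ≤ (∑ i ∈ s, K * |x i - y i|) ^ 2 := pow_le_pow_left₀ (abs_nonneg _) habs 2
    _ ≤ #s * ∑ i ∈ s, (K * |x i - y i|) ^ 2 := sq_sum_le_card_mul_sum_sq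
    _ = K ^ 2 * #s * ∑ i ∈ s, (x i - y i) ^ 2 := by
      simp_rw [mul_pow, sq_abs, ← mul_sum]; ring

lemma sum_sq_mulVec_of_transpose_mul_self_eq_one {m n R : Type*} [Fintype m] [Fintype n]
    [DecidableEq n] [CommRing R] {S : Matrix m n R} (hS : Sᵀ * S = 1) (v : n → R) :
    ∑ i, (S *ᵥ v) i ^ 2 = ∑ j, v j ^ 2 := by
  have h : (S *ᵥ v) ⬝ᵥ (S *ᵥ v) = v ⬝ᵥ v := by
    rw [dotProduct_mulVec, ← mulVec_transpose, mulVec_mulVec, hS, one_mulVec]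
  simpa [dotProduct, sq] using h

lemma sq_perturbed_gradient_step_le {m K t A u e : ℝ} (hm : 0 < m) (ht : 0 ≤ t)
    (hmono : m * A ^ 2 ≤ A * u) (hlip : u ^ 2 ≤ K ^ 2 * A ^ 2) :
    (A - t * (u + e)) ^ 2
      ≤ (1 - t * m + 2 * t ^ 2 * K ^ 2) * A ^ 2 + (t / m + 2 * t ^ 2) * e ^ 2 := by
  have hcross : -2 * t * (A * e) ≤ t * m * A ^ 2 + t / m * e ^ 2 := by
    have : 0 ≤ t / m * (m * A + e) ^ 2 := by positivity
    have hexp : t / m * (m * A + e) ^ 2 = t * m * A ^ 2 + 2 * t * (A * e) + t / m * e ^ 2 := by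
      field_simp; ring
    linarith
  have hsum : t ^ 2 * (u + e) ^ 2 ≤ t ^ 2 * (2 * (u ^ 2 + e ^ 2)) :=
    mul_le_mul_of_nonneg_left add_sq_le (sq_nonneg t)
  nlinarith [mul_le_mul_of_nonneg_left hmono ht, mul_le_mul_of_nonneg_left hlip (sq_nonneg t)]

lemma sq_add_le_one_add_mul_sq_add {ε : ℝ} (hε : 0 < ε) (a w : ℝ) :
    (a + w) ^ 2 ≤ (1 + ε) * a ^ 2 + (1 + ε⁻¹) * w ^ 2 := by
  have hexp : ε⁻¹ * (ε * a - w) ^ 2 = ε * a ^ 2 - 2 * a * w + ε⁻¹ * w ^ 2 := by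
    field_simp; ring
  nlinarith [mul_nonneg (inv_nonneg.2 hε.le) (sq_nonneg (ε * a - w))]

lemma sq_add_sub_sq_le_of_sq_le {ε a A Q : ℝ} (hε0 : 0 < ε) (hε1 : ε ≤ 1) (hQ : 0 ≤ Q)
    (ha : a ^ 2 ≤ (1 - 3 * ε) * A ^ 2 + Q) (w : ℝ) :
    (a + w) ^ 2 - A ^ 2 ≤ -2 * ε * A ^ 2 + 2 * Q + (1 + ε⁻¹) * w ^ 2 := by
  have hyoung := sq_add_le_one_add_mul_sq_add hε0 a w
  nlinarith [mul_le_mul_of_nonneg_left ha (by linarith : (0 : ℝ) ≤ 1 + ε),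
    mul_nonneg (sq_nonneg ε) (sq_nonneg A)]

lemma sq_average_step_sub_sq_le {n m L γ A u e P : ℝ} (hn : 0 < n) (hm : 0 < m) (hγ : 0 < γ)
    (hγL : γ * (8 * n * L ^ 2) ≤ m) (hγm : γ * m ≤ 4 * n) (hP : 0 ≤ P)
    (hmono : m * A ^ 2 ≤ A * u) (hu : u ^ 2 ≤ (n * L) ^ 2 * A ^ 2) (he : e ^ 2 ≤ L ^ 2 * n * P)
    (w : ℝ) :
    (A - γ / n * (u + e) + w) ^ 2 - A ^ 2
      ≤ -2 * (m / (4 * n)) * γ * A ^ 2 + (2 * L ^ 2 / m * γ + 4 * L ^ 2 / n * γ ^ 2) * P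
        + (1 + 4 * n / (γ * m)) * w ^ 2 := by
  set ε := γ * m / (4 * n)
  set Q := (L ^ 2 / m * γ + 2 * L ^ 2 / n * γ ^ 2) * P
  have hstep := sq_perturbed_gradient_step_le (e := e) hm (by positivity : 0 ≤ γ / n) hmono hu
  have hK : 2 * (γ / n) ^ 2 * (n * L) ^ 2 ≤ ε := by
    rw [div_pow, mul_pow, le_div_iff₀ (by positivity)]
    field_simp
    nlinarith
  have he' : (γ / n / m + 2 * (γ / n) ^ 2) * e ^ 2 ≤ Q := by
    calc (γ / n / m + 2 * (γ / n) ^ 2) * e ^ 2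
        ≤ (γ / n / m + 2 * (γ / n) ^ 2) * (L ^ 2 * n * P) :=
          mul_le_mul_of_nonneg_left he (by positivity)
      _ = Q := by simp only [Q]; field_simp
  have hcontr : (A - γ / n * (u + e)) ^ 2 ≤ (1 - 3 * ε) * A ^ 2 + Q := by
    have hrate : γ / n * m = 4 * ε := by simp only [ε]; field_simp
    nlinarith [mul_le_mul_of_nonneg_right hK (sq_nonneg A)]
  have hε1 : ε ≤ 1 := by rw [div_le_one (by positivity)]; exact hγm
  convert sq_add_sub_sq_le_of_sq_le (by positivity) hε1 (by positivity) hcontr w using 2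
  · simp only [ε, Q]; ring
  · simp only [ε, inv_div]

theorem wang_elia_average_subsystem_ISS_general
    (N : ℕ) (hN : 1 ≤ N)
    (f : Fin N → ℝ → ℝ)
    (hf : ∀ i, ContDiff ℝ 1 (f i))
    (ℓ : NNReal) (hℓ : 0 < ℓ)
    (hlip : ∀ i, LipschitzWith ℓ (deriv (f i)))
    (m : ℝ) (hm : 0 < m)
    (hconv : StrongConvexOn Set.univ m (fun θ => ∑ i, f i θ))
    (θstar : ℝ)
    (S : Matrix (Fin N) (Fin (N - 1)) ℝ)
    (hS2 : Sᵀ * S = 1) :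
    ∃ c₀ c₂ c₅ c₇ γ₀ : ℝ, ∃ c₆ : ℝ → ℝ,
      0 < c₀ ∧ 0 < c₂ ∧ 0 < c₅ ∧ 0 < c₇ ∧ 0 < γ₀ ∧
      (∀ γ ∈ Set.Ioc (0 : ℝ) γ₀, 0 < c₆ γ) ∧
      ∀ γ ∈ Set.Ioc (0 : ℝ) γ₀, ∀ (ξm : ℝ) (ξp : Fin (N - 1) → ℝ) (wm : ℝ),
        (ξm - (γ / N) *
            (∑ i, (deriv (f i) ((ξm + θstar) + (S *ᵥ ξp) i)
                    - deriv (f i) θstar)) + wm) ^ 2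
          - ξm ^ 2
        ≤ -2 * c₀ * γ * ξm ^ 2 + (c₇ * γ + c₅ * γ ^ 2) * (∑ j, (ξp j) ^ 2)
            + c₆ γ * wm ^ 2 := by
  have hn : (0 : ℝ) < N := by exact_mod_cast hN
  have hL : (0 : ℝ) < ℓ := hℓ
  refine ⟨m / (4 * N), 1, 4 * ℓ ^ 2 / N, 2 * ℓ ^ 2 / m, min (m / (8 * N * ℓ ^ 2)) (4 * N / m),
    fun γ => 1 + 4 * N / (γ * m), by positivity, one_pos, by positivity, by positivity,
    by positivity, fun γ hγ => by have := hγ.1; positivity, ?_⟩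
  rintro γ ⟨hγ, hγ₀⟩ ξm ξp wm
  have hdiff : ∀ i, Differentiable ℝ (f i) := fun i => (hf i).differentiable one_ne_zero
  have hmono : m * ξm ^ 2 ≤ ξm * ∑ i, (deriv (f i) (ξm + θstar) - deriv (f i) θstar) := by
    have h := hconv.mul_sq_le_deriv_sub_mul (Differentiable.fun_sum fun i _ => hdiff i)
      (ξm + θstar) θstar
    rw [deriv_fun_sum fun i _ => hdiff i _, deriv_fun_sum fun i _ => hdiff i _,
      add_sub_cancel_right] at h
    rwa [sum_sub_distrib, mul_comm ξm]
  have hu := sq_sum_sub_le_of_lipschitzWith univ hlip (fun _ => ξm + θstar) (fun _ => θstar)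
  have he := sq_sum_sub_le_of_lipschitzWith univ hlip
    (fun i => ξm + θstar + (S *ᵥ ξp) i) (fun _ => ξm + θstar)
  simp only [add_sub_cancel_right, add_sub_cancel_left, sum_const, card_univ,
    Fintype.card_fin, nsmul_eq_mul, sum_sq_mulVec_of_transpose_mul_self_eq_one hS2] at hu he
  have hsplit : ∑ i, (deriv (f i) (ξm + θstar + (S *ᵥ ξp) i) - deriv (f i) θstar)
      = ∑ i, (deriv (f i) (ξm + θstar) - deriv (f i) θstar)
        + ∑ i, (deriv (f i) (ξm + θstar + (S *ᵥ ξp) i) - deriv (f i) (ξm + θstar)) := by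
    rw [← sum_add_distrib]; exact sum_congr rfl fun _ _ => by ring
  rw [hsplit]
  exact sq_average_step_sub_sq_le hn hm hγ
    ((le_div_iff₀ (by positivity)).1 (hγ₀.trans (min_le_left _ _)))
    ((le_div_iff₀ hm).1 (hγ₀.trans (min_le_right _ _)))
    (sum_nonneg fun j _ => sq_nonneg (ξp j)) hmono (hu.trans_eq (by ring)) he wm

/-- ISS dissipation inequality for the average subsystem:
with `x = 𝟙(ξ_m + θ*) + S ξ_⊥` and
`ξ_m⁺ = ξ_m − (γ/N)𝟙ᵀ(Φ(x) − Φ(𝟙θ*)) + w_m`, there are constants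
`c₀, c₂, γ₀* > 0`, `c₅, c₇ > 0` and a function `c₆(γ) > 0` such that for all
`γ ∈ (0, γ₀*]`:
`V₁(ξ_m⁺) − V₁(ξ_m) ≤ −2c₀γ ξ_m² + (c₇γ + c₅γ²)|ξ_⊥|² + c₆(γ) w_m²`. -/
theorem wang_elia_average_subsystem_ISS
    (N : ℕ) (hN : 1 ≤ N)
    (f : Fin N → ℝ → ℝ)
    (hf : ∀ i, ContDiff ℝ 1 (f i))
    (ℓ : NNReal) (hℓ : 0 < ℓ)
    (hlip : ∀ i, LipschitzWith ℓ (deriv (f i)))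
    (m : ℝ) (hm : 0 < m)
    (hconv : StrongConvexOn Set.univ m (fun θ => ∑ i, f i θ))
    (θstar : ℝ)
    (hcrit : ∑ i, deriv (f i) θstar = 0)
    (S : Matrix (Fin N) (Fin (N - 1)) ℝ)
    (hS1 : Sᵀ *ᵥ (fun _ => (1 : ℝ)) = 0)
    (hS2 : Sᵀ * S = 1) :
    ∃ c₀ c₂ c₅ c₇ γ₀ : ℝ, ∃ c₆ : ℝ → ℝ,
      0 < c₀ ∧ 0 < c₂ ∧ 0 < c₅ ∧ 0 < c₇ ∧ 0 < γ₀ ∧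
      (∀ γ ∈ Set.Ioc (0 : ℝ) γ₀, 0 < c₆ γ) ∧
      ∀ γ ∈ Set.Ioc (0 : ℝ) γ₀, ∀ (ξm : ℝ) (ξp : Fin (N - 1) → ℝ) (wm : ℝ),
        (ξm - (γ / N) *
            (∑ i, (deriv (f i) ((ξm + θstar) + (S *ᵥ ξp) i)
                    - deriv (f i) θstar)) + wm) ^ 2
          - ξm ^ 2
        ≤ -2 * c₀ * γ * ξm ^ 2 + (c₇ * γ + c₅ * γ ^ 2) * (∑ j, (ξp j) ^ 2)
            + c₆ γ * wm ^ 2 :=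
  wang_elia_average_subsystem_ISS_general N hN f hf ℓ hℓ hlip m hm hconv θstar S hS2
end
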